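/- Suppose B, C, and invertible Λ live in an associative algebra, D is central invertible, and set L = BΛ^{1−N}C^{-1}, L̄^{-1} = DCΛ^{N−1}B^{-1}. Suppose B and C depend smoothly on a parameter t and satisfy ∂B/∂t = PB − BQ and ∂C/∂t = PC − CR together with QΛ^{1−N} = Λ^{1−N}R, for elements P, Q, R of the algebra. Then ∂L/∂t = [P, L] and ∂(L̄^{-1})/∂t = [P, L̄^{-1}]. -/

import Mathlib

/-- Algebraic core of Lemma 6.2: if `∂B = PB - BQ`, `∂C = PC - CR` and
`Q Λ^{1-N} = Λ^{1-N} R`, with `Λ` invertible and `∂`-constant and `D` a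
central `∂`-constant element, then `L = B Λ^{1-N} C⁻¹` and
`L̄⁻¹ = D C Λ^{N-1} B⁻¹` satisfy the Lax equations `∂L = [P, L]`,
`∂(L̄⁻¹) = [P, L̄⁻¹]`. -/
theorem stmt10 {A : Type*} [Ring A] (δ : A → A)
    (hadd : ∀ x y, δ (x + y) = δ x + δ y)
    (hmul : ∀ x y, δ (x * y) = δ x * y + x * δ y)
    (Λu : Aˣ) (D : A) (hD : ∀ r : A, D * r = r * D) (N : ℤ)
    (B C Binv Cinv P Q R : A)
    (hB : B * Binv = 1 ∧ Binv * B = 1) (hC : C * Cinv = 1 ∧ Cinv * C = 1)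
    (hΛ : ∀ k : ℤ, δ (((Λu ^ k : Aˣ) : A)) = 0) (hDδ : δ D = 0)
    (hδB : δ B = P * B - B * Q) (hδC : δ C = P * C - C * R)
    (hQR : Q * ((Λu ^ (1 - N) : Aˣ) : A) = ((Λu ^ (1 - N) : Aˣ) : A) * R) :
    δ (B * ((Λu ^ (1 - N) : Aˣ) : A) * Cinv)
        = P * (B * ((Λu ^ (1 - N) : Aˣ) : A) * Cinv)
          - (B * ((Λu ^ (1 - N) : Aˣ) : A) * Cinv) * P ∧
    δ (D * C * ((Λu ^ (N - 1) : Aˣ) : A) * Binv)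
        = P * (D * C * ((Λu ^ (N - 1) : Aˣ) : A) * Binv)
          - (D * C * ((Λu ^ (N - 1) : Aˣ) : A) * Binv) * P := by
  set Λ1 : A := ((Λu ^ (1 - N) : Aˣ) : A) with hΛ1
  set Λ2 : A := ((Λu ^ (N - 1) : Aˣ) : A) with hΛ2
  have h1 : δ (1 : A) = 0 := by
    have h := hmul 1 1
    simp only [one_mul, mul_one] at h
    exact right_eq_add.mp h
  have hΛ12 : Λ1 * Λ2 = 1 := by
    rw [hΛ1, hΛ2, ← Units.val_mul, ← zpow_add]
    norm_num
  have hΛ21 : Λ2 * Λ1 = 1 := by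
    rw [hΛ1, hΛ2, ← Units.val_mul, ← zpow_add]
    norm_num
  have hδCinv : δ Cinv = -(Cinv * δ C * Cinv) := by
    have h0 : δ Cinv * C + Cinv * δ C = 0 := by
      have := hmul Cinv C
      rw [hC.2, h1] at this
      exact this.symm
    have : (δ Cinv * C + Cinv * δ C) * Cinv = 0 := by rw [h0, zero_mul]
    calc δ Cinv = δ Cinv * (C * Cinv) := by rw [hC.1, mul_one]
      _ = (δ Cinv * C + Cinv * δ C) * Cinv - Cinv * δ C * Cinv := by noncomm_ring
      _ = -(Cinv * δ C * Cinv) := by rw [this, zero_sub]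
  have hδBinv : δ Binv = -(Binv * δ B * Binv) := by
    have h0 : δ Binv * B + Binv * δ B = 0 := by
      have := hmul Binv B
      rw [hB.2, h1] at this
      exact this.symm
    have : (δ Binv * B + Binv * δ B) * Binv = 0 := by rw [h0, zero_mul]
    calc δ Binv = δ Binv * (B * Binv) := by rw [hB.1, mul_one]
      _ = (δ Binv * B + Binv * δ B) * Binv - Binv * δ B * Binv := by noncomm_ring
      _ = -(Binv * δ B * Binv) := by rw [this, zero_sub]
  have sC : Cinv * (P * C - C * R) * Cinv = Cinv * P - R * Cinv := by
    have e : Cinv * (P * C - C * R) * Cinv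
        = Cinv * P * (C * Cinv) - (Cinv * C) * (R * Cinv) := by noncomm_ring
    rw [e, hC.1, hC.2, mul_one, one_mul]
  have sB : Binv * (P * B - B * Q) * Binv = Binv * P - Q * Binv := by
    have e : Binv * (P * B - B * Q) * Binv
        = Binv * P * (B * Binv) - (Binv * B) * (Q * Binv) := by noncomm_ring
    rw [e, hB.1, hB.2, mul_one, one_mul]
  have hRQ : R * Λ2 = Λ2 * Q := by
    calc R * Λ2 = (Λ2 * Λ1) * (R * Λ2) := by rw [hΛ21, one_mul]
      _ = Λ2 * (Λ1 * R) * Λ2 := by noncomm_ring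
      _ = Λ2 * (Q * Λ1) * Λ2 := by rw [hQR]
      _ = Λ2 * Q * (Λ1 * Λ2) := by noncomm_ring
      _ = Λ2 * Q := by rw [hΛ12, mul_one]
  constructor
  · calc δ (B * Λ1 * Cinv)
        = δ (B * Λ1) * Cinv + (B * Λ1) * δ Cinv := hmul _ _
      _ = (δ B * Λ1 + B * δ Λ1) * Cinv + (B * Λ1) * δ Cinv := by rw [hmul]
      _ = ((P * B - B * Q) * Λ1) * Cinv
          - B * Λ1 * (Cinv * (P * C - C * R) * Cinv) := by
          rw [hΛ1, hΛ (1-N), hδB, hδCinv, hδC]; noncomm_ring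
      _ = P * (B * Λ1 * Cinv) - B * (Q * Λ1) * Cinv
          - B * Λ1 * (Cinv * P) + B * Λ1 * (R * Cinv) := by rw [sC]; noncomm_ring
      _ = P * (B * Λ1 * Cinv) - (B * Λ1 * Cinv) * P := by rw [hQR]; noncomm_ring
  · calc δ (D * C * Λ2 * Binv)
        = δ (D * C * Λ2) * Binv + (D * C * Λ2) * δ Binv := hmul _ _
      _ = (δ (D * C) * Λ2 + (D * C) * δ Λ2) * Binv + (D * C * Λ2) * δ Binv := by
          rw [hmul (D*C) Λ2]
      _ = ((δ D * C + D * δ C) * Λ2 + (D * C) * δ Λ2) * Binv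
          + (D * C * Λ2) * δ Binv := by rw [hmul D C]
      _ = (D * (P * C - C * R) * Λ2) * Binv
          - D * C * Λ2 * (Binv * (P * B - B * Q) * Binv) := by
          rw [hΛ2, hΛ (N-1), hDδ, hδC, hδBinv, hδB]; noncomm_ring
      _ = D * P * (C * Λ2 * Binv) - D * C * (R * Λ2) * Binv
          - D * C * Λ2 * (Binv * P) + D * C * Λ2 * (Q * Binv) := by
          rw [sB]; noncomm_ring
      _ = P * (D * C * Λ2 * Binv) - (D * C * Λ2 * Binv) * P := by
          rw [hRQ, hD P]; noncomm_ring
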